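/- arXiv:math/0612057 — 2 statements merged into one kernel-verified Lean document; each statement's English description precedes it below -/
import Mathlib

section
/- Define B_q(x) = ∑_{k=0}^∞ q^{k²} x^k / (q;q)_k for x ≥ 0, where (q;q)_k = ∏_{j=1}^k (1 - q^j). Then B_q converges for all x ≥ 0 and its derivative satisfies B_q'(x) ≤ (q/(1-q)) B_q(x) for all x ≥ 0. -/
/-- The q-Pochhammer symbol `(q;q)_k = ∏_{j=1}^k (1 - q^j)`. -/
noncomputable def qPoch (q : ℝ) (k : ℕ) : ℝ := ∏ j ∈ Finset.range k, (1 - q ^ (j + 1))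

/-- `B_q(x) = ∑_{k=0}^∞ q^{k²} x^k / (q;q)_k`. -/
noncomputable def Bq (q x : ℝ) : ℝ := ∑' k : ℕ, q ^ (k ^ 2) * x ^ k / qPoch q k

/-!
The coefficients `c k = q^{k²} / (q;q)_k` satisfy `(k + 1) c (k+1) ≤ q / (1 - q) * c k`, because
`(k + 1) q^{2k} (1 - q) ≤ (k + 1) q^k (1 - q) ≤ 1 - q^{k+1}`. Iterating this recursion gives
`c k ≤ (q / (1 - q))^k / k!`, so the series and its termwise derivative are dominated by exponential
series; comparing the derived series `∑ (k + 1) c (k+1) x^k` termwise with `∑ c k x^k` gives the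
bound for `x ≥ 0`.
-/

open Nat

section PowerSeries

variable {c : ℕ → ℝ} {C : ℝ}

lemma le_mul_pow_div_factorial_of_succ_mul_le (hC : 0 ≤ C)
    (hrec : ∀ k : ℕ, (k + 1) * c (k + 1) ≤ C * c k) (k : ℕ) :
    c k ≤ c 0 * C ^ k / k ! := by
  induction k with
  | zero => simp
  | succ k ih =>
    rw [le_div_iff₀ (by positivity), factorial_succ, cast_mul, cast_succ]
    calc c (k + 1) * ((k + 1) * k !) = (k + 1) * c (k + 1) * k ! := by ring
      _ ≤ C * c k * k ! := mul_le_mul_of_nonneg_right (hrec k) (by positivity)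
      _ ≤ C * (c 0 * C ^ k / k !) * k ! := by gcongr
      _ = c 0 * C ^ (k + 1) := by field_simp; ring

lemma summable_mul_pow_of_succ_mul_le (hc : ∀ k, 0 ≤ c k) (hC : 0 ≤ C)
    (hrec : ∀ k : ℕ, (k + 1) * c (k + 1) ≤ C * c k) (x : ℝ) :
    Summable fun k => c k * x ^ k := by
  refine .of_norm_bounded ((Real.summable_pow_div_factorial (C * |x|)).mul_left (c 0))
    fun k => ?_
  rw [norm_mul, norm_pow, Real.norm_eq_abs, Real.norm_eq_abs, abs_of_nonneg (hc k)]
  calc c k * |x| ^ k ≤ c 0 * C ^ k / k ! * |x| ^ k := by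
        gcongr; exact le_mul_pow_div_factorial_of_succ_mul_le hC hrec k
    _ = c 0 * ((C * |x|) ^ k / k !) := by ring

lemma hasDerivAt_tsum_mul_pow_of_succ_mul_le (hc : ∀ k, 0 ≤ c k) (hC : 0 ≤ C)
    (hrec : ∀ k : ℕ, (k + 1) * c (k + 1) ≤ C * c k) (x : ℝ) :
    HasDerivAt (fun y => ∑' k, c k * y ^ k) (∑' k, (k + 1) * c (k + 1) * x ^ k) x := by
  set R := |x| + 1
  have hx : x ∈ Metric.ball 0 R := mem_ball_zero_iff.mpr (lt_add_one |x|)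
  have hu : Summable fun n : ℕ => C * (c (n - 1) * R ^ (n - 1)) :=
    (summable_nat_add_iff 1).mp <| by
      simpa only [add_tsub_cancel_right] using
        (summable_mul_pow_of_succ_mul_le hc hC hrec R).mul_left C
  have hbound : ∀ (n : ℕ) y, y ∈ Metric.ball 0 R →
      ‖c n * (n * y ^ (n - 1))‖ ≤ C * (c (n - 1) * R ^ (n - 1)) := by
    intro n y hy
    rw [mem_ball_zero_iff, Real.norm_eq_abs] at hy
    rw [norm_mul, norm_mul, norm_pow, Real.norm_eq_abs, Real.norm_eq_abs, Real.norm_eq_abs,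
      abs_of_nonneg (hc n), Nat.abs_cast]
    cases n with
    | zero => simp only [CharP.cast_eq_zero, zero_mul, mul_zero]; have := hc 0; positivity
    | succ m =>
      simp only [add_tsub_cancel_right, cast_succ]
      calc c (m + 1) * ((m + 1) * |y| ^ m) ≤ C * c m * R ^ m := by
            rw [← mul_assoc, mul_comm (c _)]
            exact mul_le_mul (hrec m) (pow_le_pow_left₀ (abs_nonneg y) hy.le m)
              (by positivity) (by have := hc m; positivity)
        _ = C * (c m * R ^ m) := by ring
  have hD := hasDerivAt_tsum_of_isPreconnected hu Metric.isOpen_ball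
    (convex_ball 0 R).isPreconnected (fun n y _ => (hasDerivAt_pow n y).const_mul (c n))
    hbound hx (summable_mul_pow_of_succ_mul_le hc hC hrec x) hx
  rw [(hu.of_norm_bounded fun n => hbound n x hx).tsum_eq_zero_add] at hD
  refine hD.congr_deriv ?_
  simp only [cast_zero, zero_mul, mul_zero, zero_add, cast_succ, add_tsub_cancel_right]
  exact tsum_congr fun k => by ring

lemma tsum_succ_mul_mul_pow_le_of_succ_mul_le (hc : ∀ k, 0 ≤ c k) (hC : 0 ≤ C)
    (hrec : ∀ k : ℕ, (k + 1) * c (k + 1) ≤ C * c k) {x : ℝ} (hx : 0 ≤ x) :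
    ∑' k, (k + 1) * c (k + 1) * x ^ k ≤ C * ∑' k, c k * x ^ k := by
  have hterm (k : ℕ) : (k + 1) * c (k + 1) * x ^ k ≤ C * (c k * x ^ k) := by
    rw [← mul_assoc]; exact mul_le_mul_of_nonneg_right (hrec k) (pow_nonneg hx k)
  have hsum := (summable_mul_pow_of_succ_mul_le hc hC hrec x).mul_left C
  rw [← tsum_mul_left]
  exact (hsum.of_nonneg_of_le (fun k => by have := hc (k + 1); positivity) hterm).tsum_le_tsum
    hterm hsum

end PowerSeries

lemma succ_mul_pow_mul_one_sub_le {q : ℝ} (hq0 : 0 ≤ q) (hq1 : q ≤ 1) (k : ℕ) :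
    (k + 1) * q ^ k * (1 - q) ≤ 1 - q ^ (k + 1) := by
  rw [← geom_sum_mul_neg]
  refine mul_le_mul_of_nonneg_right ?_ (sub_nonneg.mpr hq1)
  simpa using Finset.card_nsmul_le_sum (Finset.range (k + 1)) (q ^ ·) (q ^ k) fun j hj =>
      pow_le_pow_of_le_one hq0 hq1 (Finset.mem_range_succ_iff.mp hj)

lemma qPoch_pos {q : ℝ} (hq0 : 0 ≤ q) (hq1 : q < 1) (k : ℕ) : 0 < qPoch q k :=
  Finset.prod_pos fun j _ => sub_pos.mpr (pow_lt_one₀ hq0 hq1 j.succ_ne_zero)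

lemma qPoch_succ (q : ℝ) (k : ℕ) : qPoch q (k + 1) = qPoch q k * (1 - q ^ (k + 1)) :=
  Finset.prod_range_succ _ k

noncomputable def bqCoeff (q : ℝ) (k : ℕ) : ℝ := q ^ (k ^ 2) / qPoch q k

lemma bqCoeff_nonneg {q : ℝ} (hq0 : 0 ≤ q) (hq1 : q < 1) (k : ℕ) : 0 ≤ bqCoeff q k :=
  div_nonneg (pow_nonneg hq0 _) (qPoch_pos hq0 hq1 k).le

lemma bqCoeff_succ {q : ℝ} (hq0 : 0 ≤ q) (hq1 : q < 1) (k : ℕ) :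
    bqCoeff q (k + 1) = bqCoeff q k * (q * q ^ (2 * k) / (1 - q ^ (k + 1))) := by
  have := qPoch_pos hq0 hq1 k
  have := sub_pos.mpr (pow_lt_one₀ hq0 hq1 k.succ_ne_zero)
  rw [bqCoeff, bqCoeff, qPoch_succ, show (k + 1) ^ 2 = k ^ 2 + 2 * k + 1 by ring]
  field_simp
  ring

lemma succ_mul_bqCoeff_succ_le {q : ℝ} (hq0 : 0 < q) (hq1 : q < 1) (k : ℕ) :
    (k + 1) * bqCoeff q (k + 1) ≤ q / (1 - q) * bqCoeff q k := by
  have hqk : 0 < 1 - q ^ (k + 1) := sub_pos.mpr (pow_lt_one₀ hq0.le hq1 k.succ_ne_zero)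
  have hratio : (k + 1) * (q * q ^ (2 * k) / (1 - q ^ (k + 1))) ≤ q / (1 - q) := by
    rw [mul_div_assoc', div_le_div_iff₀ hqk (sub_pos.mpr hq1)]
    have hmono : q ^ (2 * k) ≤ q ^ k := pow_le_pow_of_le_one hq0.le hq1.le (by omega)
    have key := succ_mul_pow_mul_one_sub_le hq0.le hq1.le k
    nlinarith [mul_le_mul_of_nonneg_left hmono
      (by positivity : 0 ≤ (k + 1) * q * (1 - q))]
  calc (k + 1) * bqCoeff q (k + 1)
      = (k + 1) * (q * q ^ (2 * k) / (1 - q ^ (k + 1))) * bqCoeff q k := by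
        rw [bqCoeff_succ hq0.le hq1]; ring
    _ ≤ q / (1 - q) * bqCoeff q k := mul_le_mul_of_nonneg_right hratio (bqCoeff_nonneg hq0.le hq1 k)

theorem stmt_1 (q : ℝ) (hq0 : 0 < q) (hq1 : q < 1) :
    (∀ x : ℝ, 0 ≤ x → Summable (fun k : ℕ => q ^ (k ^ 2) * x ^ k / qPoch q k)) ∧
    (∀ x : ℝ, 0 ≤ x → HasDerivAt (Bq q) (deriv (Bq q) x) x ∧
      deriv (Bq q) x ≤ q / (1 - q) * Bq q x) := by
  have hc := bqCoeff_nonneg hq0.le hq1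
  have hC : 0 ≤ q / (1 - q) := div_nonneg hq0.le (sub_nonneg.mpr hq1.le)
  have hrec := succ_mul_bqCoeff_succ_le hq0 hq1
  have hterm (x : ℝ) (k : ℕ) : bqCoeff q k * x ^ k = q ^ (k ^ 2) * x ^ k / qPoch q k :=
    div_mul_eq_mul_div _ _ _
  have hBq : (fun y => ∑' k, bqCoeff q k * y ^ k) = Bq q := by
    funext y; simp only [hterm, Bq]
  refine ⟨fun x _ => ?_, fun x hx => ?_⟩
  · simpa only [hterm] using summable_mul_pow_of_succ_mul_le hc hC hrec x
  · have hD := hasDerivAt_tsum_mul_pow_of_succ_mul_le hc hC hrec x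
    rw [hBq] at hD
    rw [hD.deriv]
    refine ⟨hD, ?_⟩
    rw [← hBq]
    exact tsum_succ_mul_mul_pow_le_of_succ_mul_le hc hC hrec hx
end

section
/- For 0 < q < 1 and any nonzero complex z, the theta function Θ(z|q) = ∑_{n=-∞}^∞ q^{n²} z^n converges absolutely and satisfies the Jacobi triple product identity Θ(z|q) = (q²;q²)_∞ (-qz;q²)_∞ (-q/z;q²)_∞. -/
/-!
Expanding the finite product `∏_{j<2m} (1 + t^j y)` with `t = q²` by the Cauchy `q`-binomial
theorem and re-centring it at `y = q^{1-2m} z` gives Jacobi's identity in finite form: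
`∏_{j<m} (1 + q^{2j+1} z)(1 + q^{2j+1}/z) = ∑_{|n| ≤ m} q^{n²} [2m, m+n]_{q²} zⁿ`.
Since `[k+l, k]_t = (t;t)_{k+l} / ((t;t)_k (t;t)_l)` lies between `0` and `1/(t;t)_∞` and tends to
`1/(t;t)_∞` as `k, l → ∞`, Tannery's theorem lets `m → ∞` termwise.
-/

open Finset Filter Topology

section Monoid

variable {M : Type*}

lemma pow_choose_two_mul_pow [Monoid M] (t : M) (k : ℕ) :
    (t ^ 2) ^ k.choose 2 * t ^ k = t ^ k ^ 2 := by
  rw [← pow_mul, ← pow_add]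
  congr 1
  induction k with
  | zero => rfl
  | succ k ih => rw [Nat.choose_succ_succ', Nat.choose_one_right]; nlinarith

lemma prod_range_pow [CommMonoid M] (t : M) (m : ℕ) :
    ∏ j ∈ range m, t ^ j = t ^ m.choose 2 := by
  rw [prod_pow_eq_pow_sum, sum_range_id, Nat.choose_two_right]

lemma sum_Icc_eq_sum_range [AddCommMonoid M] (g : ℤ → M) (m : ℕ) :
    ∑ n ∈ Icc (-(m : ℤ)) m, g n = ∑ k ∈ range (2 * m + 1), g (k - m) :=
  sum_nbij' (fun n => (n + m).toNat) (fun k => (k : ℤ) - m) (by simp; omega) (by simp; omega)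
    (by intro n hn; simp at hn ⊢; omega) (by simp) (by intro n hn; simp at hn ⊢; congr; omega)

end Monoid

section QBinomial

variable {R : Type*}

def qBinom [CommSemiring R] (t : R) : ℕ → ℕ → R
  | _, 0 => 1
  | 0, _ + 1 => 0
  | n + 1, k + 1 => qBinom t n k + t ^ (k + 1) * qBinom t n (k + 1)

/-- `(t;t)_n`. -/
def qPochhammer [CommRing R] (t : R) (n : ℕ) : R := ∏ i ∈ range n, (1 - t ^ (i + 1))

/-- `(t;t)_∞`. -/
noncomputable def qPochhammerInf [CommRing R] [TopologicalSpace R] (t : R) : R :=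
  ∏' i : ℕ, (1 - t ^ (i + 1))

section Semiring

variable [CommSemiring R] (t : R)

@[simp] lemma qBinom_zero_right (n : ℕ) : qBinom t n 0 = 1 := by cases n <;> rfl

lemma qBinom_succ_succ (n k : ℕ) :
    qBinom t (n + 1) (k + 1) = qBinom t n k + t ^ (k + 1) * qBinom t n (k + 1) := rfl

lemma qBinom_eq_zero_of_lt : ∀ {n k : ℕ}, n < k → qBinom t n k = 0
  | 0, _ + 1, _ => rfl
  | n + 1, k + 1, h => by
    rw [qBinom_succ_succ, qBinom_eq_zero_of_lt (by omega), qBinom_eq_zero_of_lt (by omega)]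
    simp

@[simp] lemma qBinom_self : ∀ n : ℕ, qBinom t n n = 1
  | 0 => rfl
  | n + 1 => by rw [qBinom_succ_succ, qBinom_self n, qBinom_eq_zero_of_lt t (by omega)]; simp

lemma map_qBinom {S : Type*} [CommSemiring S] (f : R →+* S) : ∀ n k : ℕ,
    f (qBinom t n k) = qBinom (f t) n k
  | _, 0 => by simp
  | 0, _ + 1 => by simp [qBinom]
  | n + 1, k + 1 => by simp [qBinom_succ_succ, map_qBinom f n]

/-- The Cauchy `q`-binomial theorem. -/
theorem prod_one_add_pow_mul_eq_sum (n : ℕ) : ∀ y : R,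
    ∏ j ∈ range n, (1 + t ^ j * y) =
      ∑ k ∈ range (n + 1), t ^ k.choose 2 * qBinom t n k * y ^ k := by
  induction n with
  | zero => simp
  | succ n ih =>
    intro y
    set g : ℕ → R := fun k => t ^ k.choose 2 * qBinom t n k * (t * y) ^ k
    have hchoose (k : ℕ) : t ^ (k + 1).choose 2 = t ^ k.choose 2 * t ^ k := by
      rw [Nat.choose_succ_succ', Nat.choose_one_right, pow_add, mul_comm]
    have hlow : ∑ k ∈ range (n + 1), t ^ (k + 1).choose 2 * qBinom t n k * y ^ (k + 1) =
        y * ∑ k ∈ range (n + 1), g k := by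
      rw [mul_sum]
      refine sum_congr rfl fun k _ => ?_
      rw [hchoose]
      ring
    have hhigh : ∑ k ∈ range (n + 1),
        t ^ (k + 1).choose 2 * (t ^ (k + 1) * qBinom t n (k + 1)) * y ^ (k + 1) + 1 =
        ∑ k ∈ range (n + 1), g k := by
      have hg : g (n + 1) = 0 := by simp [g, qBinom_eq_zero_of_lt t (Nat.lt_succ_self n)]
      rw [show ∑ k ∈ range (n + 1), g k = ∑ k ∈ range (n + 2), g k by
        rw [sum_range_succ g (n + 1), hg, add_zero], sum_range_succ' g]
      congr 1
      · refine sum_congr rfl fun k _ => ?_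
        simp only [g, hchoose]
        ring
      · simp [g]
    rw [prod_range_succ', prod_congr rfl fun k _ =>
      show 1 + t ^ (k + 1) * y = 1 + t ^ k * (t * y) by ring, ih (t * y),
      sum_range_succ' _ (n + 1)]
    simp only [qBinom_succ_succ, mul_add, add_mul, sum_add_distrib, hlow]
    rw [add_assoc, show t ^ Nat.choose 0 2 * qBinom t (n + 1) 0 * y ^ 0 = 1 by simp, hhigh]
    simp only [g]
    ring

end Semiring

section Ring

variable [CommRing R] (t : R)

@[simp] lemma qPochhammer_zero : qPochhammer t 0 = 1 := prod_range_zero _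

lemma qPochhammer_succ (n : ℕ) : qPochhammer t (n + 1) = qPochhammer t n * (1 - t ^ (n + 1)) :=
  prod_range_succ _ _

theorem qBinom_mul_qPochhammer_mul_qPochhammer : ∀ k l : ℕ,
    qBinom t (k + l) k * qPochhammer t k * qPochhammer t l = qPochhammer t (k + l)
  | 0, l => by simp
  | k + 1, 0 => by simp
  | k + 1, l + 1 => by
    have h1 := qBinom_mul_qPochhammer_mul_qPochhammer k (l + 1)
    have h2 := qBinom_mul_qPochhammer_mul_qPochhammer (k + 1) l
    rw [show k + (l + 1) = k + l + 1 by omega, qPochhammer_succ t l] at h1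
    rw [show k + 1 + l = k + l + 1 by omega, qPochhammer_succ t k] at h2
    rw [show k + 1 + (l + 1) = k + l + 1 + 1 by omega, qBinom_succ_succ, qPochhammer_succ t k,
      qPochhammer_succ t l, qPochhammer_succ t (k + l + 1)]
    linear_combination (1 - t ^ (k + 1)) * h1 + t ^ (k + 1) * (1 - t ^ (l + 1)) * h2

end Ring

end QBinomial

section FiniteTripleProduct

variable {K : Type*} [Field K] {u z : K}

theorem jacobi_triple_product_finite (hu : u ≠ 0) (hz : z ≠ 0) (m : ℕ) :
    (∏ j ∈ range m, (1 + u * z * (u ^ 2) ^ j)) * ∏ j ∈ range m, (1 + u / z * (u ^ 2) ^ j) =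
      ∑ n ∈ Icc (-(m : ℤ)) m, u ^ (n ^ 2) * qBinom (u ^ 2) (2 * m) (n + m).toNat * z ^ n := by
  -- With `y = u^{1-2m} z`, the factor `j = m + i` of `∏_{j<2m} (1 + (u²)^j y)` is
  -- `1 + u z (u²)^i`, and the factor `j = m - 1 - i` is `(u²)^j y · (1 + (u/z) (u²)^i)`.
  set y := u * z / (u ^ 2) ^ m
  have hupper : ∏ j ∈ range m, (1 + (u ^ 2) ^ (m + j) * y) =
      ∏ j ∈ range m, (1 + u * z * (u ^ 2) ^ j) := by
    refine prod_congr rfl fun j _ => ?_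
    simp only [y, pow_add]
    field_simp
  have hlower : ∏ j ∈ range m, (1 + (u ^ 2) ^ j * y) =
      z ^ m / u ^ (m ^ 2) * ∏ j ∈ range m, (1 + u / z * (u ^ 2) ^ j) := by
    have hscale : ∏ j ∈ range m, (u ^ 2) ^ j * y = z ^ m / u ^ (m ^ 2) :=
      calc ∏ j ∈ range m, (u ^ 2) ^ j * y
          = (u ^ 2) ^ m.choose 2 * u ^ m * z ^ m / (u ^ 2) ^ (m * m) := by
            rw [prod_mul_distrib, prod_range_pow, prod_const, card_range]
            simp only [y]
            ring
        _ = z ^ m / u ^ (m ^ 2) := by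
            rw [pow_choose_two_mul_pow]
            field_simp
            ring
    rw [← hscale, ← prod_range_reflect (fun j => 1 + u / z * (u ^ 2) ^ j), ← prod_mul_distrib]
    refine prod_congr rfl fun j hj => ?_
    obtain ⟨i, rfl⟩ := Nat.exists_eq_add_of_lt (mem_range.1 hj)
    rw [show j + i + 1 - 1 - j = i by omega]
    simp only [y, pow_add]
    field_simp
    ring
  have hprod := prod_one_add_pow_mul_eq_sum (u ^ 2) (2 * m) y
  rw [two_mul m, prod_range_add, hlower, hupper, ← two_mul] at hprod
  have hlhs : (∏ j ∈ range m, (1 + u * z * (u ^ 2) ^ j)) *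
      ∏ j ∈ range m, (1 + u / z * (u ^ 2) ^ j) = u ^ (m ^ 2) / z ^ m *
        ∑ k ∈ range (2 * m + 1), (u ^ 2) ^ k.choose 2 * qBinom (u ^ 2) (2 * m) k * y ^ k := by
    rw [← hprod]
    field_simp
  rw [hlhs, sum_Icc_eq_sum_range, mul_sum]
  refine sum_congr rfl fun k _ => ?_
  rw [show ((k : ℤ) - m + m).toNat = k by omega, zpow_sub₀ hz, zpow_natCast, zpow_natCast,
    show ((k : ℤ) - m) ^ 2 = ((k ^ 2 + m ^ 2 : ℕ) : ℤ) - ((2 * m * k : ℕ) : ℤ) by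
      push_cast; ring,
    zpow_sub₀ hu, zpow_natCast, zpow_natCast, pow_add, ← pow_choose_two_mul_pow u k]
  simp only [y, div_pow, ← pow_mul]
  field_simp
  ring

end FiniteTripleProduct

section Products

variable {𝕜 : Type*} [NormedField 𝕜] {w : 𝕜}

lemma summable_norm_mul_pow (c : 𝕜) (hw : ‖w‖ < 1) :
    Summable fun j : ℕ => ‖c * w ^ j‖ := by
  simpa [norm_pow] using (summable_geometric_of_lt_one (norm_nonneg w) hw).mul_left ‖c‖

lemma multipliable_one_add_mul_pow [CompleteSpace 𝕜] (c : 𝕜) (hw : ‖w‖ < 1) :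
    Multipliable fun j : ℕ => 1 + c * w ^ j :=
  multipliable_one_add_of_summable (summable_norm_mul_pow c hw)

lemma qPochhammerInf_ne_zero [CompleteSpace 𝕜] (hw : ‖w‖ < 1) : qPochhammerInf w ≠ 0 := by
  have hpow (i : ℕ) : ‖w ^ (i + 1)‖ < 1 := by
    rw [norm_pow]
    exact pow_lt_one₀ (norm_nonneg w) hw i.succ_ne_zero
  have := tprod_one_add_ne_zero_of_summable (f := fun i : ℕ => -w * w ^ i)
    (fun i h => by
      rw [neg_mul, ← pow_succ', ← sub_eq_add_neg, sub_eq_zero] at h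
      simpa [← h] using hpow i)
    (summable_norm_mul_pow (-w) hw)
  simpa [qPochhammerInf, ← sub_eq_add_neg, ← pow_succ'] using this

end Products

section Estimates

variable {t : ℝ}

lemma qPochhammer_pos (ht0 : 0 ≤ t) (ht1 : t < 1) (n : ℕ) : 0 < qPochhammer t n :=
  prod_pos fun i _ => sub_pos.2 (pow_lt_one₀ ht0 ht1 (Nat.succ_ne_zero i))

lemma qPochhammer_antitone (ht0 : 0 ≤ t) (ht1 : t < 1) : Antitone (qPochhammer t) :=
  antitone_nat_of_succ_le fun n => by
    rw [qPochhammer_succ]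
    exact mul_le_of_le_one_right (qPochhammer_pos ht0 ht1 n).le (by simp; positivity)

lemma multipliable_one_sub_pow_succ (ht0 : 0 ≤ t) (ht1 : t < 1) :
    Multipliable fun i : ℕ => 1 - t ^ (i + 1) :=
  (multipliable_one_add_mul_pow (-t) (by rwa [Real.norm_of_nonneg ht0])).congr fun i => by ring

lemma tendsto_qPochhammer (ht0 : 0 ≤ t) (ht1 : t < 1) :
    Tendsto (qPochhammer t) atTop (𝓝 (qPochhammerInf t)) :=
  (multipliable_one_sub_pow_succ ht0 ht1).tendsto_prod_tprod_nat

lemma qPochhammerInf_le (ht0 : 0 ≤ t) (ht1 : t < 1) (n : ℕ) :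
    qPochhammerInf t ≤ qPochhammer t n :=
  (qPochhammer_antitone ht0 ht1).le_of_tendsto (tendsto_qPochhammer ht0 ht1) n

lemma qPochhammerInf_pos (ht0 : 0 ≤ t) (ht1 : t < 1) : 0 < qPochhammerInf t :=
  lt_of_le_of_ne (ge_of_tendsto' (tendsto_qPochhammer ht0 ht1)
    fun n => (qPochhammer_pos ht0 ht1 n).le)
    (qPochhammerInf_ne_zero (by rwa [Real.norm_of_nonneg ht0])).symm

lemma ofReal_qPochhammerInf (ht0 : 0 ≤ t) (ht1 : t < 1) :
    ((qPochhammerInf t : ℝ) : ℂ) = qPochhammerInf (t : ℂ) := by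
  simpa [qPochhammerInf] using (multipliable_one_sub_pow_succ ht0 ht1).map_tprod
    Complex.ofRealHom Complex.continuous_ofReal

lemma qBinom_nonneg (ht0 : 0 ≤ t) : ∀ n k : ℕ, 0 ≤ qBinom t n k
  | _, 0 => by simp
  | 0, _ + 1 => le_rfl
  | n + 1, k + 1 => by
    have := qBinom_nonneg ht0 n k
    have := qBinom_nonneg ht0 n (k + 1)
    rw [qBinom_succ_succ]
    positivity

lemma qBinom_add_eq_div (ht0 : 0 ≤ t) (ht1 : t < 1) (k l : ℕ) :
    qBinom t (k + l) k = qPochhammer t (k + l) / (qPochhammer t k * qPochhammer t l) := by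
  rw [← qBinom_mul_qPochhammer_mul_qPochhammer, mul_assoc, mul_div_cancel_right₀]
  exact (mul_pos (qPochhammer_pos ht0 ht1 k) (qPochhammer_pos ht0 ht1 l)).ne'

lemma qBinom_le_inv_qPochhammerInf (ht0 : 0 ≤ t) (ht1 : t < 1) (n k : ℕ) :
    qBinom t n k ≤ (qPochhammerInf t)⁻¹ := by
  rcases lt_or_ge n k with hnk | hkn
  · rw [qBinom_eq_zero_of_lt t hnk]
    exact (inv_pos.2 (qPochhammerInf_pos ht0 ht1)).le
  obtain ⟨l, rfl⟩ := Nat.exists_eq_add_of_le hkn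
  have hk := qPochhammer_pos ht0 ht1 k
  have hl := qPochhammer_pos ht0 ht1 l
  calc qBinom t (k + l) k = qPochhammer t (k + l) / (qPochhammer t k * qPochhammer t l) :=
        qBinom_add_eq_div ht0 ht1 k l
    _ ≤ qPochhammer t k / (qPochhammer t k * qPochhammer t l) := by
        gcongr
        exact qPochhammer_antitone ht0 ht1 (Nat.le_add_right k l)
    _ = (qPochhammer t l)⁻¹ := by field_simp
    _ ≤ (qPochhammerInf t)⁻¹ := by
        gcongr
        exacts [qPochhammerInf_pos ht0 ht1, qPochhammerInf_le ht0 ht1 l]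

lemma tendsto_qBinom_add (ht0 : 0 ≤ t) (ht1 : t < 1) :
    Tendsto (fun p : ℕ × ℕ => qBinom t (p.1 + p.2) p.1) (atTop ×ˢ atTop)
      (𝓝 (qPochhammerInf t)⁻¹) := by
  have hL := (qPochhammerInf_pos ht0 ht1).ne'
  have hP := tendsto_qPochhammer ht0 ht1
  have hsum : Tendsto (fun p : ℕ × ℕ => qPochhammer t (p.1 + p.2)) (atTop ×ˢ atTop)
      (𝓝 (qPochhammerInf t)) :=
    hP.comp (tendsto_atTop_mono (fun p => Nat.le_add_right _ _) tendsto_fst)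
  have := hsum.div ((hP.comp tendsto_fst).mul (hP.comp tendsto_snd)) (mul_ne_zero hL hL)
  rw [show qPochhammerInf t / (qPochhammerInf t * qPochhammerInf t) = (qPochhammerInf t)⁻¹ by
    field_simp] at this
  exact this.congr fun p => (qBinom_add_eq_div ht0 ht1 p.1 p.2).symm

lemma tendsto_qBinom_two_mul (ht0 : 0 ≤ t) (ht1 : t < 1) (n : ℤ) :
    Tendsto (fun m : ℕ => qBinom t (2 * m) (n + m).toNat) atTop
      (𝓝 (qPochhammerInf t)⁻¹) := by
  have hpair : Tendsto (fun m : ℕ => ((n + m).toNat, (m - n).toNat)) atTop (atTop ×ˢ atTop) :=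
    (tendsto_atTop_atTop.2 fun b => ⟨b + n.natAbs, fun m hm => by omega⟩).prodMk
      (tendsto_atTop_atTop.2 fun b => ⟨b + n.natAbs, fun m hm => by omega⟩)
  refine ((tendsto_qBinom_add ht0 ht1).comp hpair).congr' ?_
  filter_upwards [eventually_ge_atTop n.natAbs] with m hm
  simp only [Function.comp_apply]
  congr 1
  omega

end Estimates

open Complex Real in
theorem summable_pow_sq_mul_zpow {q z : ℂ} (hq0 : q ≠ 0) (hq1 : ‖q‖ < 1) (hz : z ≠ 0) :
    Summable (fun n : ℤ => q ^ (n ^ 2) * z ^ n) := by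
  have him : 0 < (Complex.log q / (π * I)).im := by
    have : Real.log ‖q‖ < 0 := Real.log_neg (norm_pos_iff.2 hq0) hq1
    simpa [div_eq_mul_inv, Complex.log_re] using mul_neg_of_neg_of_pos this (inv_pos.2 pi_pos)
  refine ((summable_jacobiTheta₂_term_iff (Complex.log z / (2 * π * I)) _).2 him).congr
    fun n => ?_
  rw [jacobiTheta₂_term, show 2 * π * I * n * (Complex.log z / (2 * π * I)) +
      π * I * n ^ 2 * (Complex.log q / (π * I)) =
      ((n ^ 2 : ℤ) : ℂ) * Complex.log q + n * Complex.log z by field_simp; push_cast; ring,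
    Complex.exp_add, Complex.exp_int_mul, Complex.exp_int_mul, Complex.exp_log hq0,
    Complex.exp_log hz]

theorem tendsto_jacobi_partial_products {q : ℝ} (hq0 : 0 < q) (hq1 : q < 1) {z : ℂ}
    (hz : z ≠ 0) :
    Tendsto (fun m : ℕ => (∏ j ∈ range m, (1 + (q : ℂ) * z * ((q : ℂ) ^ 2) ^ j)) *
        ∏ j ∈ range m, (1 + (q : ℂ) / z * ((q : ℂ) ^ 2) ^ j)) atTop
      (𝓝 ((qPochhammerInf ((q : ℂ) ^ 2))⁻¹ *
        ∑' n : ℤ, (q : ℂ) ^ (n ^ 2) * z ^ n)) := by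
  have ht0 : 0 ≤ q ^ 2 := by positivity
  have ht1 : q ^ 2 < 1 := by nlinarith
  have hq : (q : ℂ) ≠ 0 := by exact_mod_cast hq0.ne'
  have hcast (n k : ℕ) : qBinom ((q : ℂ) ^ 2) n k = ((qBinom (q ^ 2) n k : ℝ) : ℂ) := by
    rw [show (q : ℂ) ^ 2 = Complex.ofRealHom (q ^ 2) by simp]
    exact (map_qBinom (q ^ 2) Complex.ofRealHom n k).symm
  have hL : qPochhammerInf ((q : ℂ) ^ 2) = ((qPochhammerInf (q ^ 2) : ℝ) : ℂ) := by
    rw [ofReal_qPochhammerInf ht0 ht1]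
    push_cast
    rfl
  have hθ : Summable fun n : ℤ => (q : ℂ) ^ (n ^ 2) * z ^ n := by
    refine summable_pow_sq_mul_zpow hq ?_ hz
    rwa [Complex.norm_real, Real.norm_of_nonneg hq0.le]
  rw [hL, ← tsum_mul_left]
  simp_rw [jacobi_triple_product_finite hq hz]
  refine (tendsto_tsum_of_dominated_convergence
    (bound := fun n => ‖(q : ℂ) ^ (n ^ 2) * z ^ n‖ * (qPochhammerInf (q ^ 2))⁻¹)
    (hθ.norm.mul_right _) (fun n => ?_) (Eventually.of_forall fun m n => ?_)).congr
    fun m => (sum_eq_tsum_indicator _ _).symm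
  · have := ((Complex.continuous_ofReal.tendsto _).comp
      (tendsto_qBinom_two_mul ht0 ht1 n)).mul_const ((q : ℂ) ^ (n ^ 2) * z ^ n)
    rw [Complex.ofReal_inv] at this
    refine this.congr' ?_
    filter_upwards [eventually_ge_atTop n.natAbs] with m hm
    rw [Set.indicator_of_mem (by simp; omega), hcast]
    simp only [Function.comp_apply]
    ring
  · refine (norm_indicator_le_norm_self _ _).trans ?_
    rw [hcast, norm_mul, norm_mul, norm_mul, Complex.norm_real,
      Real.norm_of_nonneg (qBinom_nonneg ht0 _ _), mul_right_comm]
    gcongr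
    exact qBinom_le_inv_qPochhammerInf ht0 ht1 _ _

theorem stmt_12 (q : ℝ) (hq0 : 0 < q) (hq1 : q < 1) (z : ℂ) (hz : z ≠ 0) :
    Summable (fun n : ℤ => (q : ℂ) ^ (n ^ 2) * z ^ n) ∧
    (∑' n : ℤ, (q : ℂ) ^ (n ^ 2) * z ^ n) =
      (∏' j : ℕ, (1 - (q : ℂ) ^ 2 * ((q : ℂ) ^ 2) ^ j)) *
      (∏' j : ℕ, (1 + (q : ℂ) * z * ((q : ℂ) ^ 2) ^ j)) *
      (∏' j : ℕ, (1 + (q : ℂ) / z * ((q : ℂ) ^ 2) ^ j)) := by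
  have hq : (q : ℂ) ≠ 0 := by exact_mod_cast hq0.ne'
  have hw : ‖(q : ℂ) ^ 2‖ < 1 := by
    rw [norm_pow, Complex.norm_real, Real.norm_of_nonneg hq0.le]
    nlinarith
  have hprod := tendsto_nhds_unique
    ((multipliable_one_add_mul_pow _ hw).tendsto_prod_tprod_nat.mul
      (multipliable_one_add_mul_pow _ hw).tendsto_prod_tprod_nat)
    (tendsto_jacobi_partial_products hq0 hq1 hz)
  refine ⟨summable_pow_sq_mul_zpow hq (by simpa using hw) hz, ?_⟩
  rw [mul_assoc, hprod, show ∏' j : ℕ, (1 - (q : ℂ) ^ 2 * ((q : ℂ) ^ 2) ^ j) =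
    qPochhammerInf ((q : ℂ) ^ 2) from tprod_congr fun j => by ring,
    mul_inv_cancel_left₀ (qPochhammerInf_ne_zero hw)]
end
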